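/- arXiv:1308.2810 — 4 statements merged into one kernel-verified Lean document; each statement's English description precedes it below -/
import Mathlib

section
/- Let X be a topological space and f : X → X a continuous map. Say f is 'chaotic' if any two nonempty open subsets of X share a periodic orbit, i.e., for all nonempty open U, V ⊆ X there is a periodic point p of f whose forward orbit meets both U and V. Then f is chaotic if and only if f is topologically transitive and the set of periodic points of f is dense in X. -/
/-!
Transitivity is read off a single periodic orbit meeting `U` and `V`: running once more around the
orbit from its visit to `U` reaches its visit to `V` after a positive number of steps. Density of
periodic points holds because every point of a periodic orbit is periodic. Conversely, transitivity gives a nonempty open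
set `U ∩ f^[n] ⁻¹' V`, and a periodic point in it has an orbit meeting both `U` and `V`.
-/

open Function Set

section

variable {X : Type*} (f : X → X)

def IsTopologicallyTransitive [TopologicalSpace X] : Prop :=
  ∀ U V : Set X, IsOpen U → IsOpen V → U.Nonempty → V.Nonempty →
    ∃ n ≥ 1, (f^[n] '' U ∩ V).Nonempty

def IsChaotic [TopologicalSpace X] : Prop :=
  ∀ U V : Set X, IsOpen U → IsOpen V → U.Nonempty → V.Nonempty →
    ∃ p ∈ periodicPts f, (∃ k, f^[k] p ∈ U) ∧ (∃ k, f^[k] p ∈ V)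

variable {f}

theorem iterate_mem_periodicPts {p : X} (hp : p ∈ periodicPts f) (k : ℕ) :
    f^[k] p ∈ periodicPts f :=
  let ⟨_, hn, hpn⟩ := hp
  mk_mem_periodicPts hn (hpn.apply_iterate k)

theorem exists_pos_iterate_iterate_eq_of_mem_periodicPts {p : X} (hp : p ∈ periodicPts f)
    (k l : ℕ) : ∃ m > 0, f^[m] (f^[k] p) = f^[l] p := by
  obtain ⟨n, hn, hpn⟩ := hp
  have hk : k < n * (k + 1) := by nlinarith
  refine ⟨n * (k + 1) + l - k, by omega, ?_⟩
  rw [← iterate_add_apply, show n * (k + 1) + l - k + k = l + n * (k + 1) by omega,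
    iterate_add_apply, (hpn.mul_const (k + 1)).eq]

section Topology

variable [TopologicalSpace X]

theorem IsChaotic.isTopologicallyTransitive (h : IsChaotic f) : IsTopologicallyTransitive f := by
  intro U V hU hV hUne hVne
  obtain ⟨p, hp, ⟨k, hk⟩, ⟨l, hl⟩⟩ := h U V hU hV hUne hVne
  obtain ⟨m, hm, hmkl⟩ := exists_pos_iterate_iterate_eq_of_mem_periodicPts hp k l
  exact ⟨m, hm, f^[l] p, ⟨f^[k] p, hk, hmkl⟩, hl⟩

theorem IsChaotic.dense_periodicPts (h : IsChaotic f) : Dense (periodicPts f) := by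
  refine dense_iff_inter_open.2 fun U hU hUne ↦ ?_
  obtain ⟨p, hp, ⟨k, hk⟩, -⟩ := h U U hU hU hUne hUne
  exact ⟨f^[k] p, hk, iterate_mem_periodicPts hp k⟩

theorem IsTopologicallyTransitive.isChaotic (hf : Continuous f) (ht : IsTopologicallyTransitive f)
    (hd : Dense (periodicPts f)) : IsChaotic f := by
  intro U V hU hV hUne hVne
  obtain ⟨n, -, _, ⟨x, hxU, rfl⟩, hxV⟩ := ht U V hU hV hUne hVne
  have hW : IsOpen (U ∩ f^[n] ⁻¹' V) := hU.inter ((hf.iterate n).isOpen_preimage V hV)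
  obtain ⟨p, ⟨hpU, hpV⟩, hp⟩ := hd.inter_open_nonempty _ hW ⟨x, hxU, hxV⟩
  exact ⟨p, hp, ⟨0, hpU⟩, ⟨n, hpV⟩⟩

end Topology

end

/-- Chaotic ↔ transitive ∧ dense periodic points. -/
theorem chaotic_iff_transitive_and_densePeriodic
    {X : Type*} [TopologicalSpace X] (f : X → X) (hf : Continuous f) :
    (∀ U V : Set X, IsOpen U → IsOpen V → U.Nonempty → V.Nonempty →
        ∃ p : X, (∃ n ≥ 1, f^[n] p = p) ∧
          (∃ k : ℕ, f^[k] p ∈ U) ∧ (∃ k : ℕ, f^[k] p ∈ V)) ↔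
    ((∀ U V : Set X, IsOpen U → IsOpen V → U.Nonempty → V.Nonempty →
        ∃ n ≥ 1, (f^[n] '' U ∩ V).Nonempty) ∧
      Dense {p : X | ∃ n ≥ 1, f^[n] p = p}) :=
  show IsChaotic f ↔ IsTopologicallyTransitive f ∧ Dense (periodicPts f) from
    ⟨fun h ↦ ⟨h.isTopologicallyTransitive, h.dense_periodicPts⟩,
      fun ⟨ht, hd⟩ ↦ ht.isChaotic hf hd⟩
end

section
/- If f : X → X is topologically transitive and the periodic points of f are dense in X, then any two nonempty open subsets of X share a periodic orbit: for all nonempty open U, V there is a periodic point p with O(p) ∩ U ≠ ∅ and O(p) ∩ V ≠ ∅. -/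
theorem Dense.exists_mem_inter_preimage_of_image_inter_nonempty {X Y : Type*}
    [TopologicalSpace X] [TopologicalSpace Y] {S U : Set X} {V : Set Y} {g : X → Y}
    (hS : Dense S) (hg : Continuous g) (hU : IsOpen U) (hV : IsOpen V)
    (hUV : (g '' U ∩ V).Nonempty) : ∃ p ∈ S, p ∈ U ∧ g p ∈ V := by
  obtain ⟨p, hpUV, hpS⟩ :=
    hS.inter_open_nonempty _ (hU.inter (hV.preimage hg)) (Set.image_inter_nonempty_iff.mp hUV)
  exact ⟨p, hpS, hpUV⟩

/-- Transitive with dense periodic points implies chaotic. -/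
theorem chaotic_of_transitive_densePeriodic
    {X : Type*} [TopologicalSpace X] (f : X → X) (hf : Continuous f)
    (htrans : ∀ U V : Set X, IsOpen U → IsOpen V → U.Nonempty → V.Nonempty →
        ∃ n ≥ 1, (f^[n] '' U ∩ V).Nonempty)
    (hdense : Dense {p : X | ∃ n ≥ 1, f^[n] p = p}) :
    ∀ U V : Set X, IsOpen U → IsOpen V → U.Nonempty → V.Nonempty →
      ∃ p : X, (∃ n ≥ 1, f^[n] p = p) ∧
        (∃ k : ℕ, f^[k] p ∈ U) ∧ (∃ k : ℕ, f^[k] p ∈ V) := by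
  intro U V hU hV hUne hVne
  obtain ⟨n, -, hUV⟩ := htrans U V hU hV hUne hVne
  obtain ⟨p, hper, hpU, hpV⟩ :=
    hdense.exists_mem_inter_preimage_of_image_inter_nonempty (hf.iterate n) hU hV hUV
  exact ⟨p, hper, ⟨0, hpU⟩, ⟨n, hpV⟩⟩
end

section
/- Let X be a Hausdorff uniform space and f : X → X a map having two periodic points with disjoint orbits. Then there is an entourage W such that for every x ∈ X there is a periodic point q of f with W[fᵏ(q)] ∩ W[x] = ∅ for all k ≥ 0. -/
/-!
Both periodic orbits are finite, hence compact and closed, and they are disjoint, so some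
entourage `V` keeps their uniform thickenings apart. Take `W` symmetric with `W ○ W ⊆ V`: if
`W[x]` met a `W`-ball around each orbit, `x` would lie in both `V`-thickenings.
-/

open Set Function UniformSpace
open scoped Uniformity

theorem Function.IsPeriodicPt.finite_range_iterate {α : Type*} {f : α → α} {n : ℕ} {x : α}
    (h : IsPeriodicPt f n x) (hn : 0 < n) : (range fun k => f^[k] x).Finite :=
  ((finite_Iio n).image fun k => f^[k] x).subset <| by
    rintro _ ⟨k, rfl⟩
    exact ⟨k % n, Nat.mod_lt k hn, h.iterate_mod_apply k⟩

theorem Disjoint.exists_entourage_forall_disjoint_ball_or {α : Type*} [UniformSpace α]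
    {A B : Set α} (hA : IsCompact A) (hB : IsClosed B) (h : Disjoint A B) :
    ∃ W ∈ 𝓤 α, ∀ x, (∀ a ∈ A, Disjoint (ball a W) (ball x W)) ∨
      (∀ b ∈ B, Disjoint (ball b W) (ball x W)) := by
  obtain ⟨V, hV, hVAB⟩ := h.exists_uniform_thickening hA hB
  obtain ⟨W, hW, hWsymm, hWV⟩ := comp_symm_mem_uniformity_sets hV
  have mem_ball_of_meets : ∀ c x, ¬Disjoint (ball c W) (ball x W) → x ∈ ball c V := by
    intro c x hcx
    obtain ⟨z, hcz, hxz⟩ := not_disjoint_iff.1 hcx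
    exact hWV (mem_ball_comp hcz (mem_ball_symmetry.1 hxz))
  refine ⟨W, hW, fun x => ?_⟩
  by_contra! ⟨⟨a, ha, hax⟩, ⟨b, hb, hbx⟩⟩
  exact hVAB.ne_of_mem (mem_biUnion ha (mem_ball_of_meets a x hax))
    (mem_biUnion hb (mem_ball_of_meets b x hbx)) rfl

/-- Lemma 2: in a Hausdorff uniform space, if `f` has two periodic points with
disjoint orbits, there is an entourage `W` such that for every `x` there is a
periodic point `q` whose orbit's `W`-balls are disjoint from `W[x]`. -/
theorem exists_entourage_ball_orbit_disjoint
    {X : Type*} [UniformSpace X] [T2Space X] (f : X → X)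
    (r s : X) (hr : ∃ n ≥ 1, f^[n] r = r) (hs : ∃ n ≥ 1, f^[n] s = s)
    (hdisj : (Set.range fun k : ℕ => f^[k] r) ∩ (Set.range fun k : ℕ => f^[k] s) = ∅) :
    ∃ W ∈ uniformity X, ∀ x : X, ∃ q : X, (∃ n ≥ 1, f^[n] q = q) ∧
      ∀ k : ℕ, UniformSpace.ball (f^[k] q) W ∩ UniformSpace.ball x W = ∅ := by
  obtain ⟨n, hn, hnr⟩ := hr
  obtain ⟨m, hm, hms⟩ := hs
  have hr_fin := IsPeriodicPt.finite_range_iterate (f := f) hnr hn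
  have hs_fin := IsPeriodicPt.finite_range_iterate (f := f) hms hm
  obtain ⟨W, hW, hsep⟩ := (disjoint_iff_inter_eq_empty.2 hdisj).exists_entourage_forall_disjoint_ball_or
    hr_fin.isCompact hs_fin.isClosed
  refine ⟨W, hW, fun x => ?_⟩
  rcases hsep x with hrx | hsx
  · exact ⟨r, ⟨n, hn, hnr⟩, fun k => disjoint_iff_inter_eq_empty.1 (hrx _ ⟨k, rfl⟩)⟩
  · exact ⟨s, ⟨m, hm, hms⟩, fun k => disjoint_iff_inter_eq_empty.1 (hsx _ ⟨k, rfl⟩)⟩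
end

section
/- Let A = 𝒜 × ℕ with 𝒜 uncountable, C = {0,1}^A with the product topology ({0,1} discrete), and σ : C → C the shift (σf)(α,i) = f(α,i+1). Then σ is a chaotic map on a non-metrizable space: σ is continuous, topologically transitive, has dense periodic points, and C is not metrizable. -/
/-!
An open set around `f` contains every `g` that agrees with `f` on finitely many coordinates,
hence every `g` agreeing with `f` on the levels `< N`, for all large `N`. So `σ^[N]` maps each
neighbourhood of `f` onto the whole space (keep the first `N` levels of `f` and put an arbitrary
target above them), and repeating the first `N` levels of `f` gives a periodic point in it.
Countably many neighbourhoods of a point constrain only countably many coordinates, so with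
uncountably many coordinates there is no countable neighbourhood basis.
-/

open Filter Topology

section Cylinder

variable {ι X : Type*} [TopologicalSpace X]

lemma exists_finset_forall_eq_imp_mem {f : ι → X} {U : Set (ι → X)} (hU : U ∈ 𝓝 f) :
    ∃ I : Finset ι, ∀ g : ι → X, (∀ i ∈ I, g i = f i) → g ∈ U := by
  rw [nhds_pi, mem_pi'] at hU
  obtain ⟨I, t, ht, hIt⟩ := hU
  exact ⟨I, fun g hg => hIt fun i hi => hg i hi ▸ mem_of_mem_nhds (ht i)⟩

lemma not_firstCountableTopology_pi [T1Space X] [Nontrivial X] (hι : ¬ Countable ι) :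
    ¬ FirstCountableTopology (ι → X) := by
  classical
  intro _
  obtain ⟨x, y, hxy⟩ := exists_pair_ne X
  let f : ι → X := fun _ => x
  obtain ⟨u, hu⟩ := (𝓝 f).exists_antitone_basis
  choose I hI using fun n => exists_finset_forall_eq_imp_mem (hu.mem n)
  have hS : (⋃ n, ((I n : Set ι))).Countable :=
    Set.countable_iUnion fun n => (I n).countable_toSet
  obtain ⟨i, hi⟩ : ∃ i, i ∉ ⋃ n, (I n : Set ι) := by
    by_contra! h
    exact hι (Set.countable_univ_iff.mp (Set.eq_univ_of_forall h ▸ hS))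
  have hW : {g : ι → X | g i ≠ y} ∈ 𝓝 f :=
    (isOpen_ne.preimage (continuous_apply i)).mem_nhds hxy
  obtain ⟨n, -, hn⟩ := hu.toHasBasis.mem_iff.mp hW
  have hupd : Function.update f i y ∈ u n := hI n _ fun j hj =>
    Function.update_of_ne (fun hji : j = i => hi (Set.mem_iUnion.mpr ⟨n, hji ▸ hj⟩)) _ _
  exact hn hupd (Function.update_self i y f)

end Cylinder

section Shift

variable {ι X : Type*}

def shift (f : ι × ℕ → X) : ι × ℕ → X := fun p => f (p.1, p.2 + 1)

lemma shift_iterate_apply (n : ℕ) (f : ι × ℕ → X) (p : ι × ℕ) :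
    shift^[n] f p = f (p.1, p.2 + n) := by
  induction n generalizing p with
  | zero => rfl
  | succ n ih =>
    rw [Function.iterate_succ_apply', shift, ih, add_assoc, add_comm 1 n]

variable [TopologicalSpace X]

lemma continuous_shift : Continuous (shift : (ι × ℕ → X) → ι × ℕ → X) :=
  continuous_pi fun _ => continuous_apply _

lemma eventually_forall_eq_on_levels_imp_mem {f : ι × ℕ → X} {U : Set (ι × ℕ → X)}
    (hU : U ∈ 𝓝 f) :
    ∀ᶠ N in atTop, ∀ g : ι × ℕ → X, (∀ p : ι × ℕ, p.2 < N → g p = f p) → g ∈ U := by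
  obtain ⟨I, hI⟩ := exists_finset_forall_eq_imp_mem hU
  filter_upwards [eventually_gt_atTop ((I.image Prod.snd).sup id)] with N hN g hg
  exact hI g fun p hp =>
    hg p ((Finset.le_sup (f := id) (Finset.mem_image_of_mem _ hp)).trans_lt hN)

lemma eventually_shift_iterate_image_eq_univ {f : ι × ℕ → X} {U : Set (ι × ℕ → X)}
    (hU : U ∈ 𝓝 f) : ∀ᶠ N in atTop, shift^[N] '' U = Set.univ := by
  filter_upwards [eventually_forall_eq_on_levels_imp_mem hU] with N hN
  refine Set.eq_univ_of_forall fun g => ?_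
  let h : ι × ℕ → X := fun p => if p.2 < N then f p else g (p.1, p.2 - N)
  refine ⟨h, hN h fun p hp => if_pos hp, funext fun p => ?_⟩
  simp [h, shift_iterate_apply]

lemma exists_shift_iterate_image_inter_nonempty {f : ι × ℕ → X} {U V : Set (ι × ℕ → X)}
    (hU : U ∈ 𝓝 f) (hV : V.Nonempty) : ∃ n ≥ 1, (shift^[n] '' U ∩ V).Nonempty := by
  obtain ⟨n, hn, hsurj⟩ :=
    ((eventually_ge_atTop 1).and (eventually_shift_iterate_image_eq_univ hU)).exists
  exact ⟨n, hn, by rwa [hsurj, Set.univ_inter]⟩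

lemma dense_setOf_shift_periodic : Dense {f : ι × ℕ → X | ∃ k ≥ 1, shift^[k] f = f} := by
  refine fun f => mem_closure_iff_nhds.mpr fun U hU => ?_
  obtain ⟨N, hN, hNU⟩ :=
    ((eventually_ge_atTop 1).and (eventually_forall_eq_on_levels_imp_mem hU)).exists
  let g : ι × ℕ → X := fun p => f (p.1, p.2 % N)
  refine ⟨g, hNU g fun p hp => congrArg f (Prod.ext rfl (Nat.mod_eq_of_lt hp)), N, hN, ?_⟩
  funext p
  simp [g, shift_iterate_apply]

end Shift

/-- Theorem 2: for uncountable `𝒜`, the shift on `C = {0,1}^(𝒜 × ℕ)` is a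
chaotic map (continuous, transitive, dense periodic points) on a
non-metrizable space. -/
theorem shift_chaotic_nonmetrizable (𝒜 : Type*) (h𝒜 : ¬ Countable 𝒜) :
    (let σ : (𝒜 × ℕ → Bool) → (𝒜 × ℕ → Bool) := fun f => fun p => f (p.1, p.2 + 1)
     Continuous σ ∧
      (∀ U V : Set (𝒜 × ℕ → Bool), IsOpen U → IsOpen V → U.Nonempty → V.Nonempty →
        ∃ n ≥ 1, (σ^[n] '' U ∩ V).Nonempty) ∧
      Dense {f : 𝒜 × ℕ → Bool | ∃ k ≥ 1, σ^[k] f = f} ∧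
      ¬ TopologicalSpace.MetrizableSpace (𝒜 × ℕ → Bool)) := by
  have hA : ¬ Countable (𝒜 × ℕ) := fun _ => h𝒜 (Prod.mk_left_injective 0).countable
  refine ⟨continuous_shift, fun U V hU _ ⟨f, hf⟩ hV =>
    exists_shift_iterate_image_inter_nonempty (hU.mem_nhds hf) hV,
    dense_setOf_shift_periodic,
    fun _ => not_firstCountableTopology_pi (X := Bool) hA inferInstance⟩
end
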